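/- arXiv:2104.05380 — 2 statements merged into one kernel-verified Lean document; each statement's English description precedes it below -/
import Mathlib

section
/- Let f ∈ L^1_loc(X) and 0 < s ≤ 1/2. Then for μ-a.e. x ∈ X, the maximal s-median over balls converges to f: lim_{r→0} m_f^s(B(x,r)) = f(x). -/
open MeasureTheory Metric Set ENNReal Filter Topology

/-- The maximal `s`-median of `f` over `A`. -/
noncomputable def maxMedian {X : Type*} [MeasurableSpace X] (μ : Measure X) (s : ℝ)
    (f : X → ℝ) (A : Set X) : ℝ :=
  sInf {a : ℝ | μ {x ∈ A | a < f x} < ENNReal.ofReal s * μ A}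

/-!
If the set where `|f - c| > ε` fills less than an `s`-fraction of `A`, with `s ≤ 1/2`, then the
maximal `s`-median of `f` over `A` lies within `ε` of `c`: two sets of measure below `μ A / 2`
cannot cover `A`. For `A = B(x, r)` and `c = f x`, Chebyshev's inequality and doubling bound that
fraction by `C / ε` times the mean oscillation of `f` over `B̄(x, r)`, which tends to zero at
almost every `x` by the Lebesgue differentiation theorem for uniformly locally doubling measures.
That theorem needs second countability, which doubling provides: an `ε`-separated subset of a ball
is finite, as the disjoint balls of radius `ε / 2` around its points each carry a fixed fraction
of the measure of the ball.
-/

open scoped NNReal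

section Median

variable {X : Type*} [MeasurableSpace X] {μ : Measure X} {s : ℝ} {A : Set X}

lemma not_subset_union_of_measure_lt (hs : s ≤ 1 / 2) {S T : Set X}
    (hS : μ S < ENNReal.ofReal s * μ A) (hT : μ T < ENNReal.ofReal s * μ A) : ¬A ⊆ S ∪ T := by
  intro hsub
  have htwo : ENNReal.ofReal s * μ A + ENNReal.ofReal s * μ A ≤ μ A := by
    rw [← two_mul, ← mul_assoc]
    calc 2 * ENNReal.ofReal s * μ A ≤ 1 * μ A := by
          gcongr
          rw [← ENNReal.ofReal_ofNat, ← ENNReal.ofReal_mul zero_le_two, ← ENNReal.ofReal_one]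
          exact ENNReal.ofReal_le_ofReal (by linarith)
      _ = μ A := one_mul _
  exact (((measure_mono hsub).trans (measure_union_le S T)).trans_lt
    (ENNReal.add_lt_add hS hT)).not_ge htwo

lemma abs_maxMedian_sub_le (hs : s ≤ 1 / 2) {f : X → ℝ} {c ε : ℝ}
    (hdev : μ {y ∈ A | ε < |f y - c|} < ENNReal.ofReal s * μ A) :
    |maxMedian μ s f A - c| ≤ ε := by
  set T := {a : ℝ | μ {y ∈ A | a < f y} < ENNReal.ofReal s * μ A}
  have hmem : c + ε ∈ T := by
    refine (measure_mono fun y (hy : y ∈ A ∧ c + ε < f y) => ?_).trans_lt hdev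
    exact ⟨hy.1, lt_abs.2 (Or.inl (by linarith [hy.2]))⟩
  have hlower : ∀ a ∈ T, c - ε ≤ a := by
    intro a ha
    by_contra! hac
    refine not_subset_union_of_measure_lt hs ha hdev fun y hy => ?_
    by_cases hdy : ε < |f y - c|
    · exact Or.inr ⟨hy, hdy⟩
    · exact Or.inl ⟨hy, by linarith [(abs_le.1 (not_lt.1 hdy)).1]⟩
  rw [maxMedian, abs_le]
  constructor
  · linarith [le_csInf ⟨_, hmem⟩ hlower]
  · linarith [csInf_le ⟨c - ε, hlower⟩ hmem]

lemma measure_lt_abs_sub_le_lintegral_div {f : X → ℝ} (hf : AEMeasurable f (μ.restrict A))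
    (c : ℝ) {ε : ℝ} (hε : 0 < ε) :
    μ {y ∈ A | ε < |f y - c|} ≤ (∫⁻ y in A, ‖f y - c‖ₑ ∂μ) / ENNReal.ofReal ε := by
  calc μ {y ∈ A | ε < |f y - c|} ≤ μ ({y | ENNReal.ofReal ε ≤ ‖f y - c‖ₑ} ∩ A) := by
        refine measure_mono fun y hy => ⟨?_, hy.1⟩
        rw [mem_ofPred_eq, ← ofReal_norm, Real.norm_eq_abs]
        exact ENNReal.ofReal_le_ofReal hy.2.le
    _ ≤ μ.restrict A {y | ENNReal.ofReal ε ≤ ‖f y - c‖ₑ} := Measure.le_restrict_apply _ _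
    _ ≤ _ := meas_ge_le_lintegral_div (hf.sub_const c).enorm (by simpa using hε) ofReal_ne_top

end Median

section Doubling

variable {X : Type*} [MetricSpace X] [MeasurableSpace X] {μ : Measure X} {C : ℝ≥0∞}

def IsDoublingWith (μ : Measure X) (C : ℝ≥0∞) : Prop :=
  ∀ (x : X) (r : ℝ), μ (ball x (2 * r)) ≤ C * μ (ball x r)

lemma IsDoublingWith.measure_ball_two_pow_mul_le (hμ : IsDoublingWith μ C) (x : X) (k : ℕ)
    (r : ℝ) : μ (ball x (2 ^ k * r)) ≤ C ^ k * μ (ball x r) := by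
  induction k generalizing r with
  | zero => simp
  | succ k ih =>
    calc μ (ball x (2 ^ (k + 1) * r)) = μ (ball x (2 ^ k * (2 * r))) := by ring_nf
      _ ≤ C ^ k * (C * μ (ball x r)) := by grw [ih, hμ x r]
      _ = C ^ (k + 1) * μ (ball x r) := by ring

lemma IsDoublingWith.measure_closedBall_le (hμ : IsDoublingWith μ C) (x : X) {r : ℝ}
    (hr : 0 < r) : μ (closedBall x r) ≤ C * μ (ball x r) :=
  (measure_mono (closedBall_subset_ball (by linarith))).trans (hμ x r)

lemma IsDoublingWith.isUnifLocDoublingMeasure (hμ : IsDoublingWith μ C) (hC : C ≠ ⊤) :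
    IsUnifLocDoublingMeasure μ := by
  refine ⟨⟨C.toNNReal ^ 2, ?_⟩⟩
  filter_upwards [self_mem_nhdsWithin] with r (hr : 0 < r) x
  calc μ (closedBall x (2 * r)) ≤ C * μ (ball x (2 * r)) :=
        hμ.measure_closedBall_le x (by positivity)
    _ ≤ C * (C * μ (ball x r)) := by grw [hμ x r]
    _ ≤ ↑(C.toNNReal ^ 2) * μ (closedBall x r) := by
      rw [ENNReal.coe_pow, ENNReal.coe_toNNReal hC, sq, mul_assoc]
      grw [ball_subset_closedBall]

lemma IsDoublingWith.eventually_measure_lt_abs_sub_lt (hμ : IsDoublingWith μ C) (hC : C ≠ ⊤)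
    (hpos : ∀ (x : X) (r : ℝ), 0 < r → 0 < μ (ball x r))
    (hfin : ∀ (x : X) (r : ℝ), μ (ball x r) < ⊤) {f : X → ℝ} (hf : AEMeasurable f μ) {x : X}
    (hx : Tendsto (fun r => (∫⁻ y in closedBall x r, ‖f y - f x‖ₑ ∂μ) / μ (closedBall x r))
      (𝓝[>] 0) (𝓝 0)) {ε s : ℝ} (hε : 0 < ε) (hs : 0 < s) :
    ∀ᶠ r in 𝓝[>] 0, μ {y ∈ ball x r | ε < |f y - f x|} < ENNReal.ofReal s * μ (ball x r) := by
  set g := fun r => (∫⁻ y in closedBall x r, ‖f y - f x‖ₑ ∂μ) / μ (closedBall x r)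
  have hlim : Tendsto (fun r => C * g r / ENNReal.ofReal ε) (𝓝[>] 0) (𝓝 0) := by
    simpa using ENNReal.Tendsto.div_const (ENNReal.Tendsto.const_mul hx (Or.inr hC))
      (Or.inr (by simpa using hε))
  filter_upwards [self_mem_nhdsWithin, hlim.eventually (gt_mem_nhds (ofReal_pos.2 hs))]
    with r (hr : 0 < r) hgr
  have hcB₀ : μ (closedBall x r) ≠ 0 :=
    ((hpos x r hr).trans_le (measure_mono ball_subset_closedBall)).ne'
  have hcB : μ (closedBall x r) ≠ ⊤ := (hμ.measure_closedBall_le x hr).trans_lt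
    (mul_lt_top hC.lt_top (hfin x r)) |>.ne
  calc μ {y ∈ ball x r | ε < |f y - f x|}
      ≤ μ {y ∈ closedBall x r | ε < |f y - f x|} :=
        measure_mono fun y hy => ⟨ball_subset_closedBall hy.1, hy.2⟩
    _ ≤ (∫⁻ y in closedBall x r, ‖f y - f x‖ₑ ∂μ) / ENNReal.ofReal ε :=
        measure_lt_abs_sub_le_lintegral_div hf.restrict _ hε
    _ = g r * μ (closedBall x r) / ENNReal.ofReal ε := by rw [ENNReal.div_mul_cancel hcB₀ hcB]
    _ ≤ g r * (C * μ (ball x r)) / ENNReal.ofReal ε := by grw [hμ.measure_closedBall_le x hr]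
    _ = C * g r / ENNReal.ofReal ε * μ (ball x r) := by simp only [div_eq_mul_inv]; ring
    _ < ENNReal.ofReal s * μ (ball x r) :=
        (ENNReal.mul_lt_mul_iff_left (hpos x r hr).ne' (hfin x r).ne).2 hgr

variable [OpensMeasurableSpace X]

lemma IsDoublingWith.card_mul_measure_ball_le (hμ : IsDoublingWith μ C) {x₀ : X} {R : ℝ}
    {ε : ℝ≥0} {k : ℕ} (hk : 2 * R ≤ 2 ^ k * ((ε : ℝ) / 2)) {u : Finset X} (hu : ↑u ⊆ ball x₀ R)
    (hsep : IsSeparated ε (u : Set X)) :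
    u.card * μ (ball x₀ R) ≤ C ^ k * μ (ball x₀ (R + ε)) := by
  have hdisj : (u : Set X).PairwiseDisjoint fun p => ball p ((ε : ℝ) / 2) := by
    intro p hp q hq hpq
    refine ball_disjoint_ball ?_
    have : (ε : ℝ) < dist p q := by
      have : (ε : ℝ≥0∞) < edist p q := hsep hp hq hpq
      rwa [edist_nndist, ENNReal.coe_lt_coe, ← NNReal.coe_lt_coe, coe_nndist] at this
    linarith
  have hunion : (⋃ p ∈ u, ball p ((ε : ℝ) / 2)) ⊆ ball x₀ (R + ε) := by
    simp only [iUnion_subset_iff]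
    intro p hp y hy
    have := mem_ball.1 (hu hp)
    rw [mem_ball] at hy ⊢
    linarith [dist_triangle y p x₀]
  have hlarge : ∀ p ∈ u, μ (ball x₀ R) ≤ C ^ k * μ (ball p ((ε : ℝ) / 2)) := by
    intro p hp
    refine (measure_mono fun y hy => ?_).trans (hμ.measure_ball_two_pow_mul_le p k _)
    have := mem_ball.1 (hu hp)
    rw [mem_ball] at hy ⊢
    linarith [dist_triangle_right y p x₀]
  calc u.card * μ (ball x₀ R) = ∑ _p ∈ u, μ (ball x₀ R) := by simp
    _ ≤ ∑ p ∈ u, C ^ k * μ (ball p ((ε : ℝ) / 2)) := Finset.sum_le_sum hlarge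
    _ = C ^ k * μ (⋃ p ∈ u, ball p ((ε : ℝ) / 2)) := by
      rw [measure_biUnion_finset hdisj fun p _ => measurableSet_ball, Finset.mul_sum]
    _ ≤ C ^ k * μ (ball x₀ (R + ε)) := by grw [hunion]

lemma IsDoublingWith.finite_of_isSeparated (hμ : IsDoublingWith μ C) (hC : C ≠ ⊤)
    (hpos : ∀ (x : X) (r : ℝ), 0 < r → 0 < μ (ball x r))
    (hfin : ∀ (x : X) (r : ℝ), μ (ball x r) < ⊤) {x₀ : X} {R : ℝ} {ε : ℝ≥0} (hε : 0 < ε)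
    {t : Set X} (ht : t ⊆ ball x₀ R) (hsep : IsSeparated ε t) : t.Finite := by
  rcases t.eq_empty_or_nonempty with rfl | ⟨p, hp⟩
  · exact finite_empty
  have hR : 0 < R := dist_nonneg.trans_lt (mem_ball.1 (ht hp))
  obtain ⟨k, hk⟩ : ∃ k : ℕ, 2 * R ≤ 2 ^ k * ((ε : ℝ) / 2) := by
    obtain ⟨k, hk⟩ := pow_unbounded_of_one_lt (2 * R / ((ε : ℝ) / 2)) one_lt_two
    exact ⟨k, ((div_lt_iff₀ (by positivity)).1 hk).le⟩
  obtain ⟨N, hN⟩ := ENNReal.exists_nat_mul_gt (hpos x₀ R hR).ne'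
    (mul_ne_top (pow_ne_top hC) (hfin x₀ (R + ε)).ne)
  by_contra hinf
  obtain ⟨u, hut, rfl⟩ := Set.Infinite.exists_subset_card_eq hinf N
  exact (hμ.card_mul_measure_ball_le hk (hut.trans ht) (hsep.subset hut)).not_gt hN

lemma IsDoublingWith.secondCountableTopology (hμ : IsDoublingWith μ C) (hC : C ≠ ⊤)
    (hpos : ∀ (x : X) (r : ℝ), 0 < r → 0 < μ (ball x r))
    (hfin : ∀ (x : X) (r : ℝ), μ (ball x r) < ⊤) : SecondCountableTopology X := by
  refine secondCountable_of_almost_dense_set fun ε hε => ?_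
  obtain ⟨S, hS⟩ := zorn_subset {t : Set X | IsSeparated ε.toNNReal t} fun c hc hchain =>
    ⟨⋃₀ c, (pairwise_sUnion hchain.directedOn).2 hc, fun _ => subset_sUnion_of_mem⟩
  have hcover : IsCover ε.toNNReal univ S := IsCover.of_maximal_isSeparated (by simpa using hS)
  refine ⟨S, ?_, fun x => ?_⟩
  · rcases S.eq_empty_or_nonempty with rfl | ⟨x₀, -⟩
    · exact countable_empty
    rw [← inter_univ S, ← iUnion_ball_nat x₀, inter_iUnion]
    exact countable_iUnion fun n => (hμ.finite_of_isSeparated hC hpos hfin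
      (Real.toNNReal_pos.2 hε) inter_subset_right (hS.prop.subset inter_subset_left)).countable
  · obtain ⟨y, hy, hxy⟩ := hcover (mem_univ x)
    exact ⟨y, hy, (ENNReal.ofReal_le_ofReal_iff hε.le).1 (by rwa [← edist_dist])⟩

end Doubling

lemma IsUnifLocDoublingMeasure.ae_tendsto_lintegral_enorm_sub_div_closedBall {X E : Type*}
    [MetricSpace X] [MeasurableSpace X] [BorelSpace X] [SecondCountableTopology X]
    [NormedAddCommGroup E] (μ : Measure X) [IsLocallyFiniteMeasure μ]
    [IsUnifLocDoublingMeasure μ] {f : X → E} (hf : LocallyIntegrable f μ) :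
    ∀ᵐ x ∂μ, Tendsto (fun r => (∫⁻ y in closedBall x r, ‖f y - f x‖ₑ ∂μ) / μ (closedBall x r))
      (𝓝[>] 0) (𝓝 0) := by
  filter_upwards [(vitaliFamily μ 1).ae_tendsto_lintegral_enorm_sub_div hf] with x hx
  refine hx.comp (tendsto_closedBall_filterAt μ (fun _ => x) id tendsto_id ?_)
  filter_upwards [self_mem_nhdsWithin] with r (hr : 0 < r)
  simpa using hr.le

/-- Lebesgue differentiation theorem for medians: for `f ∈ L¹_loc` and `0 < s ≤ 1/2`,
`m_f^s(B(x,r)) → f(x)` as `r → 0⁺` for μ-a.e. `x`. -/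
theorem maxMedian_tendsto_ae {X : Type*} [MetricSpace X] [MeasurableSpace X] [BorelSpace X]
    (μ : Measure X) [IsLocallyFiniteMeasure μ] (C : ℝ≥0∞) (hC : C ≠ ⊤)
    (hdoub : ∀ (x : X) (r : ℝ), μ (ball x (2 * r)) ≤ C * μ (ball x r))
    (hpos : ∀ (x : X) (r : ℝ), 0 < r → 0 < μ (ball x r))
    (hfin : ∀ (x : X) (r : ℝ), μ (ball x r) < ⊤)
    (f : X → ℝ) (hf : LocallyIntegrable f μ) (s : ℝ) (hs : 0 < s) (hs' : s ≤ 1 / 2) :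
    ∀ᵐ x ∂μ, Tendsto (fun r => maxMedian μ s f (ball x r)) (𝓝[>] 0) (𝓝 (f x)) := by
  have hμ : IsDoublingWith μ C := hdoub
  have := hμ.secondCountableTopology hC hpos hfin
  have := hμ.isUnifLocDoublingMeasure hC
  filter_upwards [IsUnifLocDoublingMeasure.ae_tendsto_lintegral_enorm_sub_div_closedBall μ hf]
    with x hx
  refine Metric.tendsto_nhds.2 fun ε hε => ?_
  filter_upwards [hμ.eventually_measure_lt_abs_sub_lt hC hpos hfin
    hf.aestronglyMeasurable.aemeasurable hx (half_pos hε) hs] with r hr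
  exact (abs_maxMedian_sub_le hs' hr).trans_lt (half_lt_self hε)
end

section
/- Taking absolute values does not increase the median-type John–Nirenberg norm: ‖|f|‖_{JN_{p,0,s}(Ω)} ≤ ‖f‖_{JN_{p,0,s}(Ω)}. -/
open MeasureTheory Metric Set ENNReal Filter Topology

/-- The median oscillation `inf_c m_{|f-c|}^s(A)` (as an extended nonnegative real). -/
noncomputable def medOsc {X : Type*} [MeasurableSpace X] (μ : Measure X) (s : ℝ)
    (f : X → ℝ) (A : Set X) : ℝ≥0∞ :=
  ⨅ c : ℝ, ENNReal.ofReal (maxMedian μ s (fun x => |f x - c|) A)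

/-- `‖f‖_{JN_{p,0,s}(Ω)}^p`: the supremum of `Σ_i μ(B_i) (inf_c m_{|f-c|}^s(B_i))^p`
over countable collections of pairwise disjoint balls contained in `Ω`. -/
noncomputable def JNmedP {X : Type*} [PseudoMetricSpace X] [MeasurableSpace X]
    (μ : Measure X) (p s : ℝ) (Ω : Set X) (f : X → ℝ) : ℝ≥0∞ :=
  ⨆ (c : ℕ → X) (r : ℕ → ℝ) (_ : ∀ i, ball (c i) (r i) ⊆ Ω)
    (_ : Pairwise fun i j => Disjoint (ball (c i) (r i)) (ball (c j) (r j))),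
    ∑' i, μ (ball (c i) (r i)) * medOsc μ s f (ball (c i) (r i)) ^ p

/-- The median-type John--Nirenberg norm `‖f‖_{JN_{p,0,s}(Ω)}`. -/
noncomputable def JNmedNorm {X : Type*} [PseudoMetricSpace X] [MeasurableSpace X]
    (μ : Measure X) (p s : ℝ) (Ω : Set X) (f : X → ℝ) : ℝ≥0∞ :=
  JNmedP μ p s Ω f ^ (1 / p)

/-! Pointwise `||f x| - |c|| ≤ |f x - c|`, so the median oscillation of `|f|` with constant `|c|`
is at most that of `f` with constant `c`, ball by ball; the norm inequality follows by
monotonicity of the sums and suprema. -/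

section MaxMedian

variable {X : Type*} [MeasurableSpace X] (μ : Measure X) {s : ℝ} {g h : X → ℝ} {A : Set X}

lemma nonneg_of_measure_lt_ofReal_mul (hs : s ≤ 1) (hg : ∀ x ∈ A, 0 ≤ g x) {a : ℝ}
    (ha : μ {x ∈ A | a < g x} < ENNReal.ofReal s * μ A) : 0 ≤ a := by
  by_contra! ha_neg
  have hA : {x ∈ A | a < g x} = A :=
    sep_eq_self_iff_mem_true.mpr fun x hx => ha_neg.trans_le (hg x hx)
  have hsA : ENNReal.ofReal s * μ A ≤ μ A :=
    mul_le_of_le_one_left' (ENNReal.ofReal_le_one.mpr hs)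
  exact (hA ▸ ha).not_ge hsA

/-- `h ≤ g + b` guards against the junk value `sInf ∅ = 0`: it forces the two sets whose infima
define the medians to be empty together. -/
lemma maxMedian_le_maxMedian (hs : s ≤ 1) (hg : ∀ x ∈ A, 0 ≤ g x)
    (hgh : ∀ x ∈ A, g x ≤ h x) {b : ℝ} (hhg : ∀ x ∈ A, h x ≤ g x + b) :
    maxMedian μ s g A ≤ maxMedian μ s h A := by
  set Sg := {a : ℝ | μ {x ∈ A | a < g x} < ENNReal.ofReal s * μ A}
  set Sh := {a : ℝ | μ {x ∈ A | a < h x} < ENNReal.ofReal s * μ A}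
  have hSh_sub : Sh ⊆ Sg := fun a (ha : _ < _) =>
    ha.trans_le' (measure_mono fun x hx => by exact ⟨hx.1, hx.2.trans_le (hgh x hx.1)⟩)
  have hSg_shift : ∀ a ∈ Sg, a + b ∈ Sh := fun a (ha : _ < _) =>
    ha.trans_le' (measure_mono fun x hx => by exact ⟨hx.1, by linarith [hx.2, hhg x hx.1]⟩)
  rcases Sh.eq_empty_or_nonempty with hSh | hSh
  · have hSg : Sg = ∅ :=
      eq_empty_of_forall_notMem fun a ha => hSh.subset (hSg_shift a ha)
    change sInf Sg ≤ sInf Sh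
    rw [hSg, hSh]
  · exact csInf_le_csInf ⟨0, fun a ha => nonneg_of_measure_lt_ofReal_mul μ hs hg ha⟩ hSh hSh_sub

lemma medOsc_abs_le (hs : s ≤ 1) (f : X → ℝ) (A : Set X) :
    medOsc μ s (fun x => |f x|) A ≤ medOsc μ s f A := by
  refine le_iInf fun c => iInf_le_of_le |c| (ENNReal.ofReal_le_ofReal ?_)
  refine maxMedian_le_maxMedian μ hs (fun _ _ => abs_nonneg _)
    (fun x _ => abs_abs_sub_abs_le_abs_sub _ _) (b := 2 * |c|) fun x _ => ?_
  linarith [abs_sub (f x) c, le_abs_self (|f x| - |c|)]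

end MaxMedian

lemma JNmedP_mono_of_medOsc_le {X : Type*} [PseudoMetricSpace X] [MeasurableSpace X]
    {μ : Measure X} {p s : ℝ} {Ω : Set X} {f g : X → ℝ} (hp : 0 ≤ p)
    (hfg : ∀ A, medOsc μ s f A ≤ medOsc μ s g A) :
    JNmedP μ p s Ω f ≤ JNmedP μ p s Ω g := by
  unfold JNmedP
  gcongr with c r _ _ i
  exact hfg _

theorem JNmedNorm_abs_le_general {X : Type*} [PseudoMetricSpace X] [MeasurableSpace X]
    (μ : Measure X) (p s : ℝ) (Ω : Set X)
    (hp : 1 < p) (hs' : s ≤ 1 / 2) (f : X → ℝ) :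
    JNmedNorm μ p s Ω (fun x => |f x|) ≤ JNmedNorm μ p s Ω f := by
  have hs : s ≤ 1 := hs'.trans (by norm_num)
  exact ENNReal.rpow_le_rpow
    (JNmedP_mono_of_medOsc_le (by linarith) (medOsc_abs_le μ hs f)) (by positivity)

/-- `‖|f|‖_{JN_{p,0,s}(Ω)} ≤ ‖f‖_{JN_{p,0,s}(Ω)}`. -/
theorem JNmedNorm_abs_le {X : Type*} [PseudoMetricSpace X] [MeasurableSpace X]
    (μ : Measure X) (p s : ℝ) (Ω : Set X) (hΩ : IsOpen Ω)
    (hp : 1 < p) (hs : 0 < s) (hs' : s ≤ 1 / 2) (f : X → ℝ) :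
    JNmedNorm μ p s Ω (fun x => |f x|) ≤ JNmedNorm μ p s Ω f :=
  JNmedNorm_abs_le_general μ p s Ω hp hs' f
end
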